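/- arXiv:2209.11548 — 2 statements merged into one kernel-verified Lean document; each statement's English description precedes it below -/
import Mathlib

section
/- Suppose w ∈ S_n has exactly n-2 antiexceedances and w has exactly two nontrivial cycles. Then each of the two cycles, when written starting from its largest element, lists its remaining elements in strictly decreasing order; equivalently, the largest element of each cycle is not an antiexceedance and every other non-fixed point is an antiexceedance. -/
/-!
Call a non-fixed point of `w` a *cycle non-maximum* if its cycle contains a larger element.
An antiexceedance `i < w⁻¹ i` is one, witnessed by `w⁻¹ i`. Each nontrivial cycle has exactly
one maximum, so there are `#support - k ≤ n - k` cycle non-maxima when `w` has `k` nontrivial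
cycles. With `n - 2` antiexceedances and `k = 2` the inclusion is therefore an equality.
-/

/-- The set of antiexceedances of a permutation of `Fin n`: elements `i` with `i < w⁻¹ i`. -/
def aexc {n : ℕ} (w : Equiv.Perm (Fin n)) : Finset (Fin n) :=
  Finset.univ.filter fun i => i < w⁻¹ i

open Finset

namespace Equiv.Perm

variable {α : Type*} [LinearOrder α] [Fintype α]

def cycleNonMaxima (w : Perm α) : Finset α :=
  w.support.filter fun i => ∃ j, w.SameCycle i j ∧ i < j

theorem mem_cycleNonMaxima {w : Perm α} {i : α} :
    i ∈ w.cycleNonMaxima ↔ w i ≠ i ∧ ∃ j, w.SameCycle i j ∧ i < j := by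
  simp [cycleNonMaxima]

def cycleMaxima (w : Perm α) : Finset α :=
  w.support.filter fun i => ∀ j, w.SameCycle i j → j ≤ i

theorem card_cycleMaxima (w : Perm α) : #w.cycleMaxima = Multiset.card w.cycleType := by
  rw [cycleType_def, Multiset.card_map, card_val]
  refine card_bij (fun i _ => w.cycleOf i) (fun i hi => ?_) (fun i hi j hj hij => ?_)
    (fun c hc => ?_)
  · exact cycleOf_mem_cycleFactorsFinset_iff.mpr (mem_filter.mp hi).1
  · rw [cycleMaxima, mem_filter] at hi hj
    have hsame : w.SameCycle i j :=
      (sameCycle_iff_cycleOf_eq_of_mem_support hi.1 hj.1).mpr hij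
    exact le_antisymm (hj.2 i hsame.symm) (hi.2 j hsame)
  · have hne := (mem_cycleFactorsFinset_iff.mp hc).1.nonempty_support
    set m := c.support.max' hne
    have hm : m ∈ c.support := c.support.max'_mem hne
    have hcm : c = w.cycleOf m := cycle_is_cycleOf hm hc
    have hmw : m ∈ w.support := mem_cycleFactorsFinset_support_le hc hm
    refine ⟨m, mem_filter.mpr ⟨hmw, fun j hj => c.support.le_max' j ?_⟩, hcm.symm⟩
    rw [hcm, mem_support_cycleOf_iff]
    exact ⟨hj, hmw⟩

theorem card_cycleNonMaxima_add_card_cycleType (w : Perm α) :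
    #w.cycleNonMaxima + Multiset.card w.cycleType = #w.support := by
  rw [← card_cycleMaxima, cycleNonMaxima, cycleMaxima]
  simpa only [not_exists, not_and, not_lt] using
    w.support.card_filter_add_card_filter_not fun i => ∃ j, w.SameCycle i j ∧ i < j

theorem mem_cycleNonMaxima_of_lt_inv_apply {w : Perm α} {i : α} (h : i < w⁻¹ i) :
    i ∈ w.cycleNonMaxima := by
  refine mem_cycleNonMaxima.mpr ⟨fun hi => h.ne ?_, w⁻¹ i, ?_, h⟩
  · rw [eq_comm, inv_eq_iff_eq, hi]
  · exact (SameCycle.refl w i).symm_apply_right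

theorem filter_lt_inv_apply_eq_cycleNonMaxima (w : Perm α)
    (h : Fintype.card α - Multiset.card w.cycleType ≤ #{i | i < w⁻¹ i}) :
    ({i | i < w⁻¹ i} : Finset α) = w.cycleNonMaxima := by
  refine eq_of_subset_of_card_le
    (fun i hi => mem_cycleNonMaxima_of_lt_inv_apply (mem_filter.mp hi).2) ?_
  have := w.card_cycleNonMaxima_add_card_cycleType
  have := w.support.card_le_univ
  omega

end Equiv.Perm

theorem twoCycles_structure_general (n : ℕ) (w : Equiv.Perm (Fin n))
    (ha : (aexc w).card = n - 2) (hc : Multiset.card w.cycleType = 2) :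
    ∀ i : Fin n, w i ≠ i →
      (i ∈ aexc w ↔ ∃ j : Fin n, w.SameCycle i j ∧ i < j) := by
  have h : aexc w = w.cycleNonMaxima :=
    w.filter_lt_inv_apply_eq_cycleNonMaxima (by rw [Fintype.card_fin, hc]; exact ha.ge)
  intro i hi
  rw [h, Equiv.Perm.mem_cycleNonMaxima, and_iff_right hi]

/-- If `w` has exactly `n - 2` antiexceedances and exactly two nontrivial cycles, then
the largest element of each cycle is not an antiexceedance and every other non-fixed
point is an antiexceedance: a non-fixed point `i` is an antiexceedance iff there is a
strictly larger element in the same cycle. -/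
theorem twoCycles_structure (n : ℕ) (hn : 2 ≤ n) (w : Equiv.Perm (Fin n))
    (ha : (aexc w).card = n - 2) (hc : Multiset.card w.cycleType = 2) :
    ∀ i : Fin n, w i ≠ i →
      (i ∈ aexc w ↔ ∃ j : Fin n, w.SameCycle i j ∧ i < j) :=
  twoCycles_structure_general n w ha hc
end

section
/- If w ∈ S_n has exactly n-2 antiexceedances, then w has at most two nontrivial cycles. -/
/-!
The largest element `m` of a nontrivial cycle of `w` satisfies `w⁻¹ m ≤ m`, so it is not an
antiexceedance. The supports of distinct cycles are disjoint, so `w` has at most as many nontrivial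
cycles as non-antiexceedances, of which there are `n - (n - 2) ≤ 2`.
-/

open Finset

namespace Equiv.Perm

variable {α : Type*} [Fintype α] [LinearOrder α] {w c : Perm α}

theorem exists_mem_support_inv_apply_le (hc : c ∈ w.cycleFactorsFinset) :
    ∃ x ∈ c.support, w⁻¹ x ≤ x := by
  have hne : c.support.Nonempty := (mem_cycleFactorsFinset_iff.mp hc).1.nonempty_support
  set m := c.support.max' hne
  have hm : m ∈ c.support := c.support.max'_mem hne
  have hinv : c⁻¹ m = w⁻¹ m := by
    rw [cycle_is_cycleOf hm hc, cycleOf_inv, cycleOf_apply_self]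
  refine ⟨m, hm, hinv ▸ c.support.le_max' _ ?_⟩
  rwa [← support_inv, apply_mem_support, support_inv]

theorem card_cycleType_le_card_filter_inv_apply_le (w : Perm α) :
    Multiset.card w.cycleType ≤ #{x | w⁻¹ x ≤ x} := by
  have hdisj : (w.cycleFactorsFinset : Set (Perm α)).PairwiseDisjoint
      fun c => {x ∈ c.support | w⁻¹ x ≤ x} := fun c hc d hd hcd =>
    (disjoint_iff_disjoint_support.mp (cycleFactorsFinset_pairwise_disjoint w hc hd hcd)).mono
      (filter_subset _ _) (filter_subset _ _)
  calc Multiset.card w.cycleType = #w.cycleFactorsFinset := by simp [cycleType_def]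
    _ ≤ #(w.cycleFactorsFinset.biUnion fun c => {x ∈ c.support | w⁻¹ x ≤ x}) :=
      card_le_card_biUnion hdisj fun c hc =>
        let ⟨x, hx, hle⟩ := exists_mem_support_inv_apply_le hc
        ⟨x, mem_filter.mpr ⟨hx, hle⟩⟩
    _ ≤ #{x | w⁻¹ x ≤ x} := card_le_card fun x hx => by
      obtain ⟨_, _, hx⟩ := mem_biUnion.mp hx
      exact mem_filter.mpr ⟨mem_univ x, (mem_filter.mp hx).2⟩

end Equiv.Perm

theorem cycles_le_two_general (n : ℕ) (w : Equiv.Perm (Fin n))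
    (ha : (aexc w).card = n - 2) : Multiset.card w.cycleType ≤ 2 := by
  have hcompl : #{i | w⁻¹ i ≤ i} = n - #(aexc w) := by
    simp only [aexc, ← not_lt, filter_not, card_sdiff_of_subset (filter_subset _ _), card_univ,
      Fintype.card_fin]
  have := w.card_cycleType_le_card_filter_inv_apply_le
  omega

/-- If `w` has exactly `n - 2` antiexceedances then `w` has at most two nontrivial cycles. -/
theorem cycles_le_two (n : ℕ) (hn : 2 ≤ n) (w : Equiv.Perm (Fin n))
    (ha : (aexc w).card = n - 2) : Multiset.card w.cycleType ≤ 2 :=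
  cycles_le_two_general n w ha
end
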